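/- Let $1 \leq m < n$ and $k \geq 1$ be integers, $0 \leq \alpha \leq 1$, let $A \subseteq \mathbb{R}^m$ be Lebesgue measurable and let $f : A \to \mathbb{R}^{n-m}$ be measurable. If there exist countably many functions $g_j : \mathbb{R}^m \to \mathbb{R}^{n-m}$ of class $C^{k,\alpha}$ such that $\mathcal{L}^m(A \setminus \bigcup_{j=1}^\infty \{x : g_j(x) = f(x)\}) = 0$, then $f$ is approximately differentiable of order $(k,\alpha)$ at $\mathcal{L}^m$-almost every $a \in A$. -/

import Mathlib

open MeasureTheory Metric Filter Set
open scoped ENNReal Topology NNReal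

/-- The set `S` has `m`-dimensional Lebesgue density `0` at `a`. -/
def DensityZero {m : ℕ} (S : Set (EuclideanSpace ℝ (Fin m)))
    (a : EuclideanSpace ℝ (Fin m)) : Prop :=
  Filter.Tendsto (fun r : ℝ =>
    volume (S ∩ Metric.closedBall a r) / volume (Metric.closedBall a r))
    (𝓝[>] (0 : ℝ)) (𝓝 0)

/-- `P` is a polynomial function of degree at most `k`. -/
def PolyDegLE {E F : Type*} [NormedAddCommGroup E] [NormedSpace ℝ E]
    [NormedAddCommGroup F] [NormedSpace ℝ F] (k : ℕ) (P : E → F) : Prop :=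
  ∃ φ : ∀ i : ℕ, ContinuousMultilinearMap ℝ (fun _ : Fin i => E) F,
    ∀ x, P x = ∑ i ∈ Finset.range (k + 1), φ i (fun _ => x)

/-- `f : A → F` is approximately differentiable of order `(k, α)` at `a`. -/
def ApproxDiffAt {m : ℕ} {F : Type*} [NormedAddCommGroup F] [NormedSpace ℝ F]
    (k : ℕ) (α : ℝ) (A : Set (EuclideanSpace ℝ (Fin m)))
    (f : EuclideanSpace ℝ (Fin m) → F) (a : EuclideanSpace ℝ (Fin m)) : Prop :=
  DensityZero Aᶜ a ∧
  ∃ P : EuclideanSpace ℝ (Fin m) → F, PolyDegLE k P ∧ (a ∈ A → P a = f a) ∧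
    (α = 0 → ∀ ε : ℝ, 0 < ε →
      DensityZero {x | x ∈ A ∧ ε * ‖x - a‖ ^ (k : ℝ) < ‖f x - P x‖} a) ∧
    (α ≠ 0 → ∃ lam : ℝ, 0 ≤ lam ∧
      DensityZero {x | x ∈ A ∧ lam * ‖x - a‖ ^ ((k : ℝ) + α) < ‖f x - P x‖} a)

/-- `g` is of class `(k, α)`: of class `C^k`, with `D^k g` locally Hölder
continuous with exponent `α` when `α ≠ 0`. -/
def ClassKAlpha {E F : Type*} [NormedAddCommGroup E] [NormedSpace ℝ E]
    [NormedAddCommGroup F] [NormedSpace ℝ F] (k : ℕ) (α : ℝ) (g : E → F) : Prop :=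
  ContDiff ℝ k g ∧ (α ≠ 0 → ∀ x : E, ∃ U ∈ 𝓝 x, ∃ C : ℝ≥0,
    HolderOnWith C α.toNNReal (iteratedFDeriv ℝ k g) U)

/-! At almost every point `a` of `A` some piece `S j = A ∩ {g j = f}` has Lebesgue density one,
so its complement has density zero at `a` and only the points of `S j` matter. There `f = g j`,
and Taylor's formula for `g j` along the segment `[a, x]` bounds `f x - T x`, for `T` the Taylor
polynomial of order `k` of `g j` at `a`, by `C ‖x - a‖ ^ (k + β)` as soon as
`‖D^k g j x - D^k g j a‖ ≤ C ‖x - a‖ ^ β` near `a`: with `β = 0` and `C` arbitrarily small by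
continuity of `D^k g j`, and with `β = α` by its Hölder continuity.
-/

section Taylor

variable {E F : Type*} [NormedAddCommGroup E] [NormedSpace ℝ E]
    [NormedAddCommGroup F] [NormedSpace ℝ F]

lemma hasDerivAt_sum_pow_div_factorial_smul (d : ℕ) (c : ℕ → F) (t : ℝ) :
    HasDerivAt (fun s : ℝ => ∑ i ∈ Finset.range (d + 2), (s ^ i / i.factorial) • c i)
      (∑ i ∈ Finset.range (d + 1), (t ^ i / i.factorial) • c (i + 1)) t := by
  convert HasDerivAt.fun_sum (u := Finset.range (d + 2)) fun i _ =>
    ((hasDerivAt_pow i t).div_const (i.factorial : ℝ)).smul_const (c i) using 1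
  rw [Finset.sum_range_succ' _ (d + 1)]
  simp only [Nat.cast_zero, zero_mul, zero_div, zero_smul, add_zero, Nat.add_sub_cancel]
  refine Finset.sum_congr rfl fun i _ => ?_
  rw [Nat.factorial_succ, Nat.cast_mul, Nat.cast_succ,
    mul_div_mul_left _ _ (by positivity : (i : ℝ) + 1 ≠ 0)]

lemma norm_sub_sum_pow_div_factorial_smul_le (d : ℕ) (w : ℕ → ℝ → F)
    (hw : ∀ i < d, ∀ t, HasDerivAt (w i) (w (i + 1) t) t) {M β : ℝ} (hM : 0 ≤ M) (hβ : 0 ≤ β)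
    (hd : ∀ t ∈ Icc (0 : ℝ) 1, ‖w d t - w d 0‖ ≤ M * t ^ β) :
    ∀ t ∈ Icc (0 : ℝ) 1,
      ‖w 0 t - ∑ i ∈ Finset.range (d + 1), (t ^ i / i.factorial) • w i 0‖
        ≤ M * t ^ ((d : ℝ) + β) := by
  induction d generalizing w with
  | zero => simpa using hd
  | succ d ih =>
    intro t ht
    have hw' : ∀ i < d, ∀ s, HasDerivAt (w (i + 1)) (w (i + 1 + 1) s) s :=
      fun i hi => hw (i + 1) (by omega)
    set S : ℝ → F := fun s => w 0 s - ∑ i ∈ Finset.range (d + 2), (s ^ i / i.factorial) • w i 0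
    have hS : ∀ s, HasDerivAt S
        (w 1 s - ∑ i ∈ Finset.range (d + 1), (s ^ i / i.factorial) • w (i + 1) 0) s :=
      fun s => (hw 0 (by omega) s).sub (hasDerivAt_sum_pow_div_factorial_smul d _ s)
    have hS' : ∀ s ∈ Ico 0 t,
        ‖w 1 s - ∑ i ∈ Finset.range (d + 1), (s ^ i / i.factorial) • w (i + 1) 0‖
          ≤ M * t ^ ((d : ℝ) + β) := fun s hs =>
      (ih (fun i => w (i + 1)) hw' hd s ⟨hs.1, hs.2.le.trans ht.2⟩).trans <|
        by gcongr; exacts [hs.1, hs.2.le]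
    have hS0 : S 0 = 0 := by
      simp [S, Finset.sum_range_succ']
    calc ‖S t‖ = ‖S t - S 0‖ := by rw [hS0, sub_zero]
      _ ≤ M * t ^ ((d : ℝ) + β) * (t - 0) :=
        norm_image_sub_le_of_norm_deriv_le_segment' (fun s _ => (hS s).hasDerivWithinAt) hS' t
          (right_mem_Icc.2 ht.1)
      _ = M * t ^ (((d + 1 : ℕ) : ℝ) + β) := by
        rw [sub_zero, mul_assoc, ← Real.rpow_add_one' ht.1 (by positivity)]
        push_cast
        ring_nf

lemma hasDerivAt_iteratedFDeriv_add_smul {h : E → F} {k j : ℕ} (hh : ContDiff ℝ k h)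
    (hj : j < k) (a v : E) (t : ℝ) :
    HasDerivAt (fun s : ℝ => iteratedFDeriv ℝ j h (a + s • v) (fun _ => v))
      (iteratedFDeriv ℝ (j + 1) h (a + t • v) (fun _ => v)) t := by
  have hline : HasDerivAt (fun s : ℝ => a + s • v) v t := by
    simpa using ((hasDerivAt_id t).smul_const v).const_add a
  have hD : HasFDerivAt (iteratedFDeriv ℝ j h)
      (fderiv ℝ (iteratedFDeriv ℝ j h) (a + t • v)) (a + t • v) :=
    (hh.differentiable_iteratedFDeriv (by exact_mod_cast hj) _).hasFDerivAt
  convert (ContinuousMultilinearMap.apply ℝ (fun _ : Fin j => E) F fun _ => v).hasFDerivAt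
    |>.comp_hasDerivAt t (hD.comp_hasDerivAt t hline) using 1
  · rfl
  · rw [iteratedFDeriv_succ_apply_left]
    rfl

noncomputable def taylorPoly (k : ℕ) (h : E → F) (a x : E) : F :=
  ∑ i ∈ Finset.range (k + 1), (i.factorial : ℝ)⁻¹ • iteratedFDeriv ℝ i h a (fun _ => x - a)

lemma taylorPoly_self (k : ℕ) (h : E → F) (a : E) : taylorPoly k h a a = h a := by
  rw [taylorPoly, Finset.sum_eq_single_of_mem 0 (by simp)]
  · simp
  · intro i _ hi
    rw [ContinuousMultilinearMap.map_coord_zero _ (⟨0, Nat.pos_of_ne_zero hi⟩ : Fin i)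
      (sub_self a), smul_zero]

lemma norm_sub_taylorPoly_le {k : ℕ} {h : E → F} (hh : ContDiff ℝ k h) {a : E} {r C β : ℝ}
    (hC : 0 ≤ C) (hβ : 0 ≤ β)
    (hb : ∀ y ∈ ball a r, ‖iteratedFDeriv ℝ k h y - iteratedFDeriv ℝ k h a‖ ≤ C * ‖y - a‖ ^ β)
    {x : E} (hx : x ∈ ball a r) :
    ‖h x - taylorPoly k h a x‖ ≤ C * ‖x - a‖ ^ ((k : ℝ) + β) := by
  set v := x - a
  have hv : ‖v‖ < r := by rwa [mem_ball, dist_eq_norm] at hx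
  set w : ℕ → ℝ → F := fun j t => iteratedFDeriv ℝ j h (a + t • v) (fun _ => v)
  have hwk : ∀ t ∈ Icc (0 : ℝ) 1, ‖w k t - w k 0‖ ≤ C * ‖v‖ ^ ((k : ℝ) + β) * t ^ β := by
    intro t ht
    have hta : ‖a + t • v - a‖ = t * ‖v‖ := by
      rw [add_sub_cancel_left, norm_smul, Real.norm_of_nonneg ht.1]
    have hmem : a + t • v ∈ ball a r := by
      rw [mem_ball, dist_eq_norm, hta]
      nlinarith [norm_nonneg v, ht.2]
    calc ‖w k t - w k 0‖
        = ‖(iteratedFDeriv ℝ k h (a + t • v) - iteratedFDeriv ℝ k h a) fun _ => v‖ := by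
          simp [w]
      _ ≤ ‖iteratedFDeriv ℝ k h (a + t • v) - iteratedFDeriv ℝ k h a‖ * ∏ _i : Fin k, ‖v‖ :=
          ContinuousMultilinearMap.le_opNorm _ _
      _ ≤ C * (t * ‖v‖) ^ β * ‖v‖ ^ k := by
          rw [Finset.prod_const, Finset.card_univ, Fintype.card_fin, ← hta]
          gcongr
          exact hb _ hmem
      _ = C * ‖v‖ ^ ((k : ℝ) + β) * t ^ β := by
          rw [Real.mul_rpow ht.1 (norm_nonneg v),
            Real.rpow_add_of_nonneg (norm_nonneg v) (Nat.cast_nonneg k) hβ, Real.rpow_natCast]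
          ring
  have hw : ∀ i < k, ∀ t, HasDerivAt (w i) (w (i + 1) t) t :=
    fun i hi => hasDerivAt_iteratedFDeriv_add_smul hh hi a v
  have := norm_sub_sum_pow_div_factorial_smul_le k w hw (by positivity) hβ hwk 1
    (right_mem_Icc.2 zero_le_one)
  simpa [w, v, taylorPoly, div_eq_inv_mul] using this

lemma polyDegLE_sum_apply_sub (k : ℕ)
    (c : ∀ i : ℕ, ContinuousMultilinearMap ℝ (fun _ : Fin i => E) F) (a : E) :
    PolyDegLE k (fun x => ∑ i ∈ Finset.range (k + 1), c i (fun _ => x - a)) := by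
  classical
  let p : FormalMultilinearSeries ℝ E F := fun i => if i ≤ k then c i else 0
  have hp : ∀ i, k + 1 ≤ i → p i = 0 := fun i hi => if_neg (by omega)
  -- `p.changeOrigin (-a)` is the power series of `x ↦ p.sum (x - a)` at the origin.
  refine ⟨p.changeOrigin (-a), fun x => ?_⟩
  have hsum := (p.changeOrigin (-a)).sum_of_finite
    (fun i hi => p.changeOrigin_finite_of_finite hp hi) x
  rw [p.changeOrigin_eval_of_finite hp, p.sum_of_finite hp] at hsum
  refine (Finset.sum_congr rfl fun i hi => ?_).trans hsum
  simp [p, neg_add_eq_sub, Nat.lt_succ_iff.mp (Finset.mem_range.mp hi)]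

end Taylor

section Density

variable {m : ℕ} {a : EuclideanSpace ℝ (Fin m)} {S T : Set (EuclideanSpace ℝ (Fin m))}

lemma DensityZero.mono_ball (h : DensityZero T a) {δ : ℝ} (hδ : 0 < δ)
    (hST : S ∩ ball a δ ⊆ T) : DensityZero S a := by
  refine tendsto_of_tendsto_of_tendsto_of_le_of_le' tendsto_const_nhds h
    (Eventually.of_forall fun _ => zero_le) ?_
  filter_upwards [Ioo_mem_nhdsGT hδ] with r hr
  have hsub : S ∩ closedBall a r ⊆ T ∩ closedBall a r := fun x hx =>
    ⟨hST ⟨hx.1, mem_ball.2 ((mem_closedBall.1 hx.2).trans_lt hr.2)⟩, hx.2⟩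
  exact ENNReal.div_le_div_right (measure_mono hsub) _

lemma DensityZero.mono (h : DensityZero T a) (hST : S ⊆ T) : DensityZero S a :=
  h.mono_ball one_pos (inter_subset_left.trans hST)

lemma densityZero_compl_of_tendsto_one (hS : MeasurableSet S)
    (h : Tendsto (fun r : ℝ => volume (S ∩ closedBall a r) / volume (closedBall a r))
      (𝓝[>] 0) (𝓝 1)) : DensityZero Sᶜ a := by
  have hcompl : ∀ᶠ r in 𝓝[>] (0 : ℝ),
      1 - volume (S ∩ closedBall a r) / volume (closedBall a r)
        = volume (Sᶜ ∩ closedBall a r) / volume (closedBall a r) := by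
    filter_upwards [self_mem_nhdsWithin] with r (hr : 0 < r)
    have hB0 : volume (closedBall a r) ≠ 0 := (measure_closedBall_pos volume a hr).ne'
    have hBT : volume (closedBall a r) ≠ ⊤ := measure_closedBall_lt_top.ne
    refine ENNReal.sub_eq_of_eq_add_rev
      (ENNReal.div_lt_top (measure_ne_top_of_subset inter_subset_right hBT) hB0).ne ?_
    rw [ENNReal.div_add_div_same, inter_comm S, inter_comm Sᶜ, ← sdiff_eq,
      measure_inter_add_sdiff _ hS, ENNReal.div_self hB0 hBT]
  have := ENNReal.Tendsto.sub tendsto_const_nhds h (Or.inl ENNReal.one_ne_top)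
  rw [tsub_self] at this
  exact this.congr' hcompl

lemma ae_densityZero_compl (hS : MeasurableSet S) :
    ∀ᵐ a ∂volume.restrict S, DensityZero Sᶜ a := by
  filter_upwards [Besicovitch.ae_tendsto_measure_inter_div volume S] with a ha
  exact densityZero_compl_of_tendsto_one hS ha

end Density

section ApproxDiff

variable {m : ℕ} {F : Type*} [NormedAddCommGroup F] [NormedSpace ℝ F]
    {a : EuclideanSpace ℝ (Fin m)} {A S : Set (EuclideanSpace ℝ (Fin m))}
    {f g : EuclideanSpace ℝ (Fin m) → F} {k : ℕ}

lemma densityZero_lt_norm_sub_taylorPoly (hS : DensityZero Sᶜ a) (hfg : EqOn g f S)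
    (hg : ContDiff ℝ k g) {C β δ : ℝ} (hC : 0 ≤ C) (hβ : 0 ≤ β) (hδ : 0 < δ)
    (hb : ∀ x ∈ ball a δ,
      ‖iteratedFDeriv ℝ k g x - iteratedFDeriv ℝ k g a‖ ≤ C * ‖x - a‖ ^ β) :
    DensityZero {x | C * ‖x - a‖ ^ ((k : ℝ) + β) < ‖f x - taylorPoly k g a x‖} a := by
  refine hS.mono_ball hδ ?_
  rintro x ⟨hlt, hx⟩ hxS
  have hle := norm_sub_taylorPoly_le hg hC hβ hb hx
  rw [hfg hxS] at hle
  exact hle.not_gt hlt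

lemma approxDiffAt_of_densityZero_compl {α : ℝ} (hα : 0 ≤ α) (hg : ClassKAlpha k α g)
    (hSA : S ⊆ A) (hfg : EqOn g f S) (ha : a ∈ S) (hS : DensityZero Sᶜ a) :
    ApproxDiffAt k α A f a := by
  refine ⟨hS.mono (compl_subset_compl.2 hSA), taylorPoly k g a, ?_,
    fun _ => by rw [taylorPoly_self, hfg ha], fun _ ε hε => ?_, fun hα0 => ?_⟩
  · exact polyDegLE_sum_apply_sub k
      (fun i => (i.factorial : ℝ)⁻¹ • iteratedFDeriv ℝ i g a) a
  · obtain ⟨δ, hδ, hcont⟩ := Metric.continuousAt_iff.1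
      ((hg.1.continuous_iteratedFDeriv le_rfl).continuousAt (x := a)) ε hε
    have hb : ∀ x ∈ ball a δ,
        ‖iteratedFDeriv ℝ k g x - iteratedFDeriv ℝ k g a‖ ≤ ε * ‖x - a‖ ^ (0 : ℝ) := by
      intro x hx
      rw [Real.rpow_zero, mul_one, ← dist_eq_norm]
      exact (hcont hx).le
    have hdens := densityZero_lt_norm_sub_taylorPoly hS hfg hg.1 hε.le le_rfl hδ hb
    rw [add_zero] at hdens
    exact hdens.mono fun x hx => hx.2
  · obtain ⟨U, hU, C, hHolder⟩ := hg.2 hα0 a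
    obtain ⟨δ, hδ, hball⟩ := Metric.mem_nhds_iff.1 hU
    have hb : ∀ x ∈ ball a δ,
        ‖iteratedFDeriv ℝ k g x - iteratedFDeriv ℝ k g a‖ ≤ C * ‖x - a‖ ^ α := by
      intro x hx
      simpa [← dist_eq_norm, Real.coe_toNNReal α hα] using
        hHolder.dist_le (hball hx) (mem_of_mem_nhds hU)
    exact ⟨C, C.coe_nonneg,
      (densityZero_lt_norm_sub_taylorPoly hS hfg hg.1 C.coe_nonneg hα hδ hb).mono
        fun x hx => hx.2⟩

end ApproxDiff

theorem stmt2_general {m n k : ℕ}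
    (α : ℝ) (hα0 : 0 ≤ α)
    (A : Set (EuclideanSpace ℝ (Fin m))) (hA : MeasurableSet A)
    (f : EuclideanSpace ℝ (Fin m) → EuclideanSpace ℝ (Fin (n - m)))
    (hf : Measurable f)
    (g : ℕ → EuclideanSpace ℝ (Fin m) → EuclideanSpace ℝ (Fin (n - m)))
    (hg : ∀ j, ClassKAlpha k α (g j))
    (hcover : volume (A \ ⋃ j : ℕ, {x | g j x = f x}) = 0) :
    ∀ᵐ a ∂(volume.restrict A), ApproxDiffAt k α A f a := by
  set S : ℕ → Set (EuclideanSpace ℝ (Fin m)) := fun j => A ∩ {x | g j x = f x}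
  have hS : ∀ j, MeasurableSet (S j) := fun j =>
    hA.inter (measurableSet_eq_fun (hg j).1.continuous.measurable hf)
  have hcov : ∀ᵐ a ∂volume.restrict A, ∃ j, a ∈ S j := by
    refine (ae_restrict_iff' hA).2 (ae_iff.2 (measure_mono_null (fun x hx => ?_) hcover))
    simp only [mem_ofPred_eq, Classical.not_imp, not_exists] at hx
    exact ⟨hx.1, by simpa [S, hx.1] using hx.2⟩
  have hdens : ∀ᵐ a ∂volume.restrict A, ∀ j, a ∈ S j → DensityZero (S j)ᶜ a :=
    ae_all_iff.2 fun j =>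
      ae_restrict_of_ae ((ae_restrict_iff' (hS j)).1 (ae_densityZero_compl (hS j)))
  filter_upwards [hcov, hdens] with a ⟨j, ha⟩ hdens_a
  exact approxDiffAt_of_densityZero_compl hα0 (hg j) inter_subset_left (fun _ hx => hx.2) ha
    (hdens_a j ha)

theorem stmt2 {m n k : ℕ} (hm : 1 ≤ m) (hmn : m < n) (hk : 1 ≤ k)
    (α : ℝ) (hα0 : 0 ≤ α) (hα1 : α ≤ 1)
    (A : Set (EuclideanSpace ℝ (Fin m))) (hA : MeasurableSet A)
    (f : EuclideanSpace ℝ (Fin m) → EuclideanSpace ℝ (Fin (n - m)))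
    (hf : Measurable f)
    (g : ℕ → EuclideanSpace ℝ (Fin m) → EuclideanSpace ℝ (Fin (n - m)))
    (hg : ∀ j, ClassKAlpha k α (g j))
    (hcover : volume (A \ ⋃ j : ℕ, {x | g j x = f x}) = 0) :
    ∀ᵐ a ∂(volume.restrict A), ApproxDiffAt k α A f a :=
  stmt2_general α hα0 A hA f hf g hg hcover
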